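/- In the translation of intuitionistic models into C-models via the ternary relation R⇒ (R⇒ u v w iff R u w and R v w), truth of intuitionistic formulas is preserved: for all intuitionistic formulas φ and worlds w, (M, w) ⊨ φ in the intuitionistic semantics iff (M⇒, w) ⊩ φ in the atomic-logic semantics where ⇒ is interpreted by the universal truth condition over R⇒. -/
import Mathlib


/-- Intuitionistic propositional formulas: ⊤ | ⊥ | p | φ∧φ | φ∨φ | φ⇒φ. -/
inductive IForm : Type
  | top : IForm
  | bot : IForm
  | atom : ℕ → IForm
  | and : IForm → IForm → IForm
  | or : IForm → IForm → IForm
  | imp : IForm → IForm → IForm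

/-- Intuitionistic Kripke semantics. -/
def isat {W : Type} (R : W → W → Prop) (V : ℕ → W → Prop) : IForm → W → Prop
  | .top, _ => True
  | .bot, _ => False
  | .atom p, w => V p w
  | .and φ ψ, w => isat R V φ w ∧ isat R V ψ w
  | .or φ ψ, w => isat R V φ w ∨ isat R V ψ w
  | .imp φ ψ, w => ∀ v, R w v → isat R V φ v → isat R V ψ v

/-- Atomic-logic semantics over the translated model `M⇒`, where `⇒` is
interpreted by the universal truth condition over the ternary relation
`R⇒ w v u :↔ R w u ∧ R v u`. -/
def asat {W : Type} (R : W → W → Prop) (V : ℕ → W → Prop) : IForm → W → Prop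
  | .top, _ => True
  | .bot, _ => False
  | .atom p, w => V p w
  | .and φ ψ, w => asat R V φ w ∧ asat R V ψ w
  | .or φ ψ, w => asat R V φ w ∨ asat R V ψ w
  | .imp φ ψ, w => ∀ v u, (R w u ∧ R v u) → asat R V φ v → asat R V ψ u

theorem ipersist {W : Type} (R : W → W → Prop) (V : ℕ → W → Prop)
    (htrans : Transitive R)
    (hpers : ∀ p v w, R v w → V p v → V p w) :
    ∀ (φ : IForm) (v w : W), R v w → isat R V φ v → isat R V φ w := by
  intro φ
  induction φ with
  | top => intro v w _ _; trivial
  | bot => intro v w _ h; exact h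
  | atom p => intro v w hvw h; exact hpers p v w hvw h
  | and φ ψ ih1 ih2 => intro v w hvw h; exact ⟨ih1 v w hvw h.1, ih2 v w hvw h.2⟩
  | or φ ψ ih1 ih2 =>
      intro v w hvw h
      cases h with
      | inl h => exact Or.inl (ih1 v w hvw h)
      | inr h => exact Or.inr (ih2 v w hvw h)
  | imp φ ψ ih1 ih2 =>
      intro v w hvw h u hwu hφ
      exact h u (htrans hvw hwu) hφ

/-- Truth of intuitionistic formulas is preserved by the translation of
intuitionistic models into C-models via the ternary relation `R⇒`. -/
theorem intuitionistic_to_atomic_translation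
    {W : Type} (R : W → W → Prop) (V : ℕ → W → Prop)
    (hrefl : Reflexive R) (htrans : Transitive R)
    (hpers : ∀ p v w, R v w → V p v → V p w) :
    ∀ (φ : IForm) (w : W), isat R V φ w ↔ asat R V φ w := by
  intro φ
  induction φ with
  | top => intro w; rfl
  | bot => intro w; rfl
  | atom p => intro w; rfl
  | and φ ψ ih1 ih2 => intro w; exact and_congr (ih1 w) (ih2 w)
  | or φ ψ ih1 ih2 => intro w; exact or_congr (ih1 w) (ih2 w)
  | imp φ ψ ih1 ih2 =>
      intro w
      constructor
      · intro h v u hvu hφ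
        have hφv : isat R V φ v := (ih1 v).mpr hφ
        have hφu : isat R V φ u := ipersist R V htrans hpers φ v u hvu.2 hφv
        exact (ih2 u).mp (h u hvu.1 hφu)
      · intro h v hwv hφ
        exact (ih2 v).mpr (h v v ⟨hwv, hrefl v⟩ ((ih1 v).mp hφ))
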